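/- arXiv:1510.05309 — 2 statements merged into one kernel-verified Lean document; each statement's English description precedes it below -/
import Mathlib

section
/- Let $E$ be a row-finite directed graph with no sources, $R$ an integral domain with involution, and $n$ a normalizer of the diagonal $D(E)$ in the Steinberg algebra $A_R(G_E)$. Then $\operatorname{supp}(n)\operatorname{supp}(n)^{-1} \cup \operatorname{supp}(n)^{-1}\operatorname{supp}(n)$ is contained in the isotropy subgroupoid $\operatorname{Iso}(G_E) = \{g \in G_E : r(g) = s(g)\}$. -/
open scoped Classical BigOperators

namespace LPA

structure DirGraph where
  V : Type
  E : Type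
  r : E → V
  s : E → V

structure InfPath (G : DirGraph) where
  edges : ℕ → G.E
  compat : ∀ i, G.s (edges i) = G.r (edges (i + 1))

structure FinPath (G : DirGraph) where
  len : ℕ
  vtx : G.V
  edges : ℕ → G.E
  compat : ∀ i, i + 1 < len → G.s (edges i) = G.r (edges (i + 1))
  vtx_eq : 0 < len → vtx = G.r (edges 0)

variable {G : DirGraph}

/-- The source vertex of a finite path (its `vtx` if it has length `0`). -/
def FinPath.src (μ : FinPath G) : G.V :=
  if μ.len = 0 then μ.vtx else G.s (μ.edges (μ.len - 1))

/-- The range vertex of an infinite path. -/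
def InfPath.rng (x : InfPath G) : G.V := G.r (x.edges 0)

/-- `x ∼ₖ y`: shift equivalence with lag `k`. -/
def ShiftEquiv (x : InfPath G) (k : ℤ) (y : InfPath G) : Prop :=
  ∃ a b N : ℕ, (a : ℤ) - (b : ℤ) = k ∧ ∀ i, N ≤ i → x.edges (i + a) = y.edges (i + b)

def RowFinite (G : DirGraph) : Prop := ∀ v : G.V, {e : G.E | G.r e = v}.Finite

def NoSources (G : DirGraph) : Prop := ∀ v : G.V, ∃ e : G.E, G.r e = v

/-- `x = μ z`: the infinite path `x` is the concatenation of the finite path `μ`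
with the infinite path `z`. -/
def IsConcat (μ : FinPath G) (z x : InfPath G) : Prop :=
  z.rng = μ.src ∧ ∀ i, x.edges i = if i < μ.len then μ.edges i else z.edges (i - μ.len)

/-- `ρ = μ β`: concatenation of finite paths. -/
def IsAppendF (μ β ρ : FinPath G) : Prop :=
  ρ.len = μ.len + β.len ∧ (∀ i < μ.len, ρ.edges i = μ.edges i) ∧
    (∀ i < β.len, ρ.edges (μ.len + i) = β.edges i) ∧
    ρ.vtx = if μ.len = 0 then β.vtx else μ.vtx

/-- Triples `(x, k, y)`: the ambient type of the graph groupoid. -/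
abbrev GTrip (G : DirGraph) := InfPath G × ℤ × InfPath G

def gmul (g h : GTrip G) : GTrip G := (g.1, g.2.1 + h.2.1, h.2.2)
def ginv (g : GTrip G) : GTrip G := (g.2.2, -g.2.1, g.1)
def unit (x : InfPath G) : GTrip G := (x, 0, x)

def GraphGroupoid (G : DirGraph) : Set (GTrip G) :=
  {g | ShiftEquiv g.1 g.2.1 g.2.2}

/-- `BC` for subsets of the groupoid. -/
def setMul (B C : Set (GTrip G)) : Set (GTrip G) :=
  {g | ∃ γ ∈ B, ∃ η ∈ C, γ.2.2 = η.1 ∧ g = gmul γ η}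

def setInv (B : Set (GTrip G)) : Set (GTrip G) := ginv '' B

/-- The cylinder set `Z(μ)` of infinite paths extending `μ`. -/
def Zset (μ : FinPath G) : Set (InfPath G) :=
  {x | (∀ i < μ.len, x.edges i = μ.edges i) ∧ x.rng = μ.vtx}

/-- The basic compact open bisection `Z(μ,ν) = {(μz, |μ|-|ν|, νz)}`. -/
def ZZ (μ ν : FinPath G) : Set (GTrip G) :=
  {g | ∃ z : InfPath G, IsConcat μ z g.1 ∧ IsConcat ν z g.2.2 ∧
    g.2.1 = (μ.len : ℤ) - (ν.len : ℤ)}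

instance : TopologicalSpace (InfPath G) :=
  TopologicalSpace.generateFrom {S | ∃ μ : FinPath G, S = Zset μ}

def unitSet (S : Set (InfPath G)) : Set (GTrip G) := {g | ∃ x ∈ S, g = unit x}

variable (R : Type) [CommRing R]

/-- The diagonal `D(E)` of the Steinberg algebra. -/
noncomputable def Diag (G : DirGraph) : Submodule R (GTrip G → R) :=
  Submodule.span R {f | ∃ μ : FinPath G, f = Set.indicator (unitSet (Zset μ)) 1}

/-- The Steinberg algebra `A_R(G_E)` as a set of functions on the groupoid. -/
noncomputable def Steinberg (G : DirGraph) : Submodule R (GTrip G → R) :=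
  Submodule.span R
    {f | ∃ μ ν : FinPath G, μ.src = ν.src ∧ f = Set.indicator (ZZ μ ν) 1}

variable {R}

/-- Convolution product. -/
noncomputable def conv (f g : GTrip G → R) : GTrip G → R :=
  fun γ => ∑ᶠ η ∈ {η : GTrip G | η.1 = γ.1}, f η * g (gmul (ginv η) γ)

/-- Involution `f^*(γ) = star (f (γ⁻¹))`. -/
def starf [StarRing R] (f : GTrip G → R) : GTrip G → R :=
  fun γ => star (f (ginv γ))

/-- `n` is a normalizer of the diagonal. -/
def IsNormalizer [StarRing R] (n : GTrip G → R) : Prop :=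
  n ∈ Steinberg R G ∧ ∀ d ∈ Diag R G,
    conv (conv n d) (starf n) ∈ Diag R G ∧ conv (conv (starf n) d) n ∈ Diag R G

/-- `α_n(x) = r(supp(n) x)` (given by a choice; unique for normalizers). -/
noncomputable def alphaFun (n : GTrip G → R) (x : InfPath G) : InfPath G :=
  if h : ∃ g : GTrip G, n g ≠ 0 ∧ g.2.2 = x then h.choose.1 else x

/-- `dom(n) = supp(n^* n)`, as a subset of the infinite path space. -/
noncomputable def domSet [StarRing R] (n : GTrip G → R) : Set (InfPath G) :=
  {x | conv (starf n) n (unit x) ≠ 0}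

/-- `ran(n) = supp(n n^*)`, as a subset of the infinite path space. -/
noncomputable def ranSet [StarRing R] (n : GTrip G → R) : Set (InfPath G) :=
  {x | conv n (starf n) (unit x) ≠ 0}

/-- `d ∘ α_n`, viewed as a function on the groupoid vanishing off `s(supp n)`. -/
noncomputable def dAlpha (d n : GTrip G → R) : GTrip G → R := fun g =>
  if (g.2.1 = 0 ∧ g.1 = g.2.2 ∧ ∃ h : GTrip G, n h ≠ 0 ∧ h.2.2 = g.2.2)
  then d (unit (alphaFun n g.2.2)) else 0

/-- `p_x`, the characteristic function of the unit `{x}`. -/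
noncomputable def ppt (R : Type) [CommRing R] (x : InfPath G) : GTrip G → R :=
  Set.indicator {unit x} 1

/-- `f` is homogeneous of degree `k`. -/
def Homog (k : ℤ) (f : GTrip G → R) : Prop := ∀ g : GTrip G, f g ≠ 0 → g.2.1 = k

def IsCycle (η : FinPath G) : Prop :=
  0 < η.len ∧ η.src = η.vtx ∧
    ∀ i j, 0 < i → i + 1 < η.len → 0 < j → j + 1 < η.len → i ≠ j →
      G.s (η.edges i) ≠ G.r (η.edges j)

def HasEntrance (η : FinPath G) : Prop :=
  ∃ (e : G.E) (i : ℕ), i < η.len ∧ G.r e = G.r (η.edges i) ∧ e ≠ η.edges i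

/-- `z = η η η ⋯`. -/
def IsPeriodicOf (η : FinPath G) (z : InfPath G) : Prop :=
  ∀ i, z.edges i = η.edges (i % η.len)

end LPA

/-!
Suppose `γ, η ∈ supp n` have the same source `x` but different ranges. Since every `Z(μ, ν)` is
a bisection, only finitely many elements of `supp n` have range `r γ`, so some cylinder
`Z(x₁ ⋯ x_L)` contains no source of them other than `x`; let `d` be its characteristic function.
Among the degrees `k` with `n(r γ, k, x) ≠ 0` take the largest `k₀`, among those `j` with
`n(r η, j, x) ≠ 0` the smallest `j₀`. In the convolution `(n d n^*)(r γ, k₀ - j₀, r η)` only one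
term survives, the product `n(r γ, k₀, x) · star n(r η, j₀, x)`, which is nonzero because `R` is
a domain. But `n d n^*` lies in the diagonal, which vanishes off the units, while `r γ ≠ r η`.
The statement about ranges follows by applying this to the normalizer `n^*`, and
`supp n ⊆ G_E` because every `Z(μ, ν)` lies in `G_E`.
-/

open Function

theorem finsum_mem_eq_single {α M : Type*} [AddCommMonoid M] {s : Set α} {f : α → M} {a : α}
    (ha : a ∈ s) (h : ∀ x ∈ s, x ≠ a → f x = 0) : ∑ᶠ x ∈ s, f x = f a := by
  rw [finsum_mem_def, finsum_eq_single _ a fun x hx => ?_, Set.indicator_of_mem ha]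
  by_cases hxs : x ∈ s
  · rw [Set.indicator_of_mem hxs, h x hxs hx]
  · exact Set.indicator_of_notMem hxs _

theorem Set.Finite.exists_eq_of_forall_lt_eq {α : Type*} {S : Set (ℕ → α)} (hS : S.Finite)
    (x : ℕ → α) : ∃ L, ∀ y ∈ S, (∀ i < L, y i = x i) → y = x := by
  have hy : ∀ y ∈ S, ∀ᶠ L in Filter.atTop, (∀ i < L, y i = x i) → y = x := by
    intro y _
    by_cases hyx : y = x
    · exact Filter.Eventually.of_forall fun _ _ => hyx
    · obtain ⟨i, hi⟩ := Function.ne_iff.mp hyx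
      filter_upwards [Filter.eventually_gt_atTop i] with L hL h
      exact absurd (h i hL) hi
  exact ((Filter.eventually_all_finite hS).mpr hy).exists

theorem Int.exists_isolated_sub_mem {A B : Set ℤ} (hA : A.Finite) (hB : B.Finite)
    (hA' : A.Nonempty) (hB' : B.Nonempty) :
    ∃ k₀ t, k₀ ∈ A ∧ k₀ - t ∈ B ∧ ∀ k ∈ A, k - t ∈ B → k = k₀ := by
  obtain ⟨k₀, hk₀, hmax⟩ := Set.exists_max_image A id hA hA'
  obtain ⟨j₀, hj₀, hmin⟩ := Set.exists_min_image B id hB hB'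
  refine ⟨k₀, k₀ - j₀, hk₀, by simpa using hj₀, fun k hk hkt => ?_⟩
  have := hmax k hk
  have := hmin _ hkt
  simp only [id] at *
  omega

section span

variable {α R M : Type*} [Semiring R] [AddCommMonoid M] [Module R M] {S : Set (α → M)}
  {f : α → M}

theorem support_subset_of_mem_span (hf : f ∈ Submodule.span R S) {T : Set α}
    (hS : ∀ g ∈ S, support g ⊆ T) : support f ⊆ T := by
  induction hf using Submodule.span_induction with
  | mem g hg => exact hS g hg
  | zero => simp
  | add g g' _ _ hg hg' => exact (support_add g g').trans (Set.union_subset hg hg')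
  | smul r g _ hg => exact (support_const_smul_subset r g).trans hg

theorem finite_support_inter_of_mem_span (hf : f ∈ Submodule.span R S) {T : Set α}
    (hS : ∀ g ∈ S, (support g ∩ T).Finite) : (support f ∩ T).Finite := by
  induction hf using Submodule.span_induction with
  | mem g hg => exact hS g hg
  | zero => simp
  | add g g' _ _ hg hg' =>
    exact (hg.union hg').subset fun ξ ⟨hξ, hξT⟩ =>
      (support_add g g' hξ).imp (⟨·, hξT⟩) (⟨·, hξT⟩)
  | smul r g _ hg => exact hg.subset (Set.inter_subset_inter_left _ (support_const_smul_subset r g))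

end span

namespace LPA

variable {G : DirGraph}

theorem InfPath.edges_injective : Injective (InfPath.edges (G := G)) := by
  rintro ⟨_, _⟩ ⟨_, _⟩ rfl
  rfl

def InfPath.prefix (x : InfPath G) (L : ℕ) : FinPath G :=
  ⟨L, x.rng, x.edges, fun i _ => x.compat i, fun _ => rfl⟩

theorem InfPath.mem_Zset_prefix (x : InfPath G) (L : ℕ) : x ∈ Zset (x.prefix L) :=
  ⟨fun _ _ => rfl, rfl⟩

theorem ginv_ginv (g : GTrip G) : ginv (ginv g) = g := by
  simp [ginv]

theorem unit_injective : Injective (unit (G := G)) :=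
  fun _ _ h => congrArg Prod.fst h

theorem unit_mem_unitSet {U : Set (InfPath G)} {x : InfPath G} : unit x ∈ unitSet U ↔ x ∈ U :=
  ⟨fun ⟨_, hy, h⟩ => unit_injective h ▸ hy, fun hx => ⟨x, hx, rfl⟩⟩

theorem unitSet_subset_range_unit (U : Set (InfPath G)) : unitSet U ⊆ Set.range unit :=
  fun _ ⟨x, _, h⟩ => ⟨x, h.symm⟩

section graphGroupoid

theorem ginv_mem_graphGroupoid {g : GTrip G} (hg : g ∈ GraphGroupoid G) :
    ginv g ∈ GraphGroupoid G := by
  obtain ⟨a, b, N, hab, h⟩ := hg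
  exact ⟨b, a, N, by simp only [ginv]; omega, fun i hi => (h i hi).symm⟩

theorem gmul_mem_graphGroupoid {g h : GTrip G} (hg : g ∈ GraphGroupoid G)
    (hh : h ∈ GraphGroupoid G) (hgh : g.2.2 = h.1) : gmul g h ∈ GraphGroupoid G := by
  obtain ⟨a, b, N, hab, hg⟩ := hg
  obtain ⟨a', b', N', hab', hh⟩ := hh
  refine ⟨a + a', b + b', N + N', by simp only [gmul]; omega, fun i hi => ?_⟩
  calc g.1.edges (i + (a + a'))
      _ = g.1.edges (i + a' + a) := by rw [Nat.add_right_comm, Nat.add_assoc]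
      _ = h.1.edges (i + b + a') := by rw [hg _ (by omega), hgh, Nat.add_right_comm]
      _ = h.2.2.edges (i + (b + b')) := by rw [hh _ (by omega), Nat.add_assoc]

theorem setMul_subset_graphGroupoid {B C : Set (GTrip G)} (hB : B ⊆ GraphGroupoid G)
    (hC : C ⊆ GraphGroupoid G) : setMul B C ⊆ GraphGroupoid G := by
  rintro _ ⟨γ, hγ, η, hη, hγη, rfl⟩
  exact gmul_mem_graphGroupoid (hB hγ) (hC hη) hγη

theorem setInv_subset_graphGroupoid {B : Set (GTrip G)} (hB : B ⊆ GraphGroupoid G) :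
    setInv B ⊆ GraphGroupoid G := by
  rintro _ ⟨γ, hγ, rfl⟩
  exact ginv_mem_graphGroupoid (hB hγ)

end graphGroupoid

section bisection

theorem IsConcat.edges_eq {μ : FinPath G} {z x : InfPath G} (h : IsConcat μ z x) (j : ℕ) :
    z.edges j = x.edges (j + μ.len) := by
  rw [h.2, if_neg (by omega), Nat.add_sub_cancel]

theorem IsConcat.tail_unique {μ : FinPath G} {z z' x : InfPath G} (h : IsConcat μ z x)
    (h' : IsConcat μ z' x) : z = z' :=
  InfPath.edges_injective <| funext fun j => by rw [h.edges_eq, h'.edges_eq]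

theorem IsConcat.unique {μ : FinPath G} {z x x' : InfPath G} (h : IsConcat μ z x)
    (h' : IsConcat μ z x') : x = x' :=
  InfPath.edges_injective <| funext fun i => by rw [h.2, h'.2]

theorem ZZ_subset_graphGroupoid (μ ν : FinPath G) : ZZ μ ν ⊆ GraphGroupoid G := by
  rintro _ ⟨z, hμ, hν, hk⟩
  exact ⟨μ.len, ν.len, 0, hk.symm, fun i _ => by rw [← hμ.edges_eq, ← hν.edges_eq]⟩

theorem ginv_mem_ZZ {μ ν : FinPath G} {g : GTrip G} : ginv g ∈ ZZ μ ν ↔ g ∈ ZZ ν μ := by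
  simp only [ZZ, ginv, Set.mem_ofPred_eq]
  refine exists_congr fun z => ⟨fun ⟨h₁, h₂, h₃⟩ => ⟨h₂, h₁, by omega⟩,
    fun ⟨h₁, h₂, h₃⟩ => ⟨h₂, h₁, by omega⟩⟩

theorem ZZ_inter_fst_subsingleton (μ ν : FinPath G) (w : InfPath G) :
    (ZZ μ ν ∩ {ξ | ξ.1 = w}).Subsingleton := by
  rintro ⟨_, k, y⟩ ⟨⟨z, hμ, hν, hk⟩, rfl⟩ ⟨_, k', y'⟩ ⟨⟨z', hμ', hν', hk'⟩, hw⟩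
  obtain rfl : z = z' := hμ.tail_unique (hw ▸ hμ')
  obtain rfl : y = y' := hν.unique hν'
  simp_all

end bisection

variable {R : Type} [CommRing R]

section steinberg

theorem support_subset_graphGroupoid {n : GTrip G → R} (hn : n ∈ Steinberg R G) :
    support n ⊆ GraphGroupoid G :=
  support_subset_of_mem_span hn fun _ ⟨μ, ν, _, h⟩ =>
    h ▸ Set.support_indicator_subset.trans (ZZ_subset_graphGroupoid μ ν)

theorem finite_support_inter_fst {n : GTrip G → R} (hn : n ∈ Steinberg R G) (w : InfPath G) :
    (support n ∩ {ξ | ξ.1 = w}).Finite :=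
  finite_support_inter_of_mem_span hn fun _ ⟨μ, ν, _, h⟩ =>
    h ▸ (ZZ_inter_fst_subsingleton μ ν w).finite.subset
      (Set.inter_subset_inter_left _ Set.support_indicator_subset)

theorem finite_setOf_apply_ne_zero {n : GTrip G → R} (hn : n ∈ Steinberg R G)
    (w x : InfPath G) : {k : ℤ | n (w, k, x) ≠ 0}.Finite :=
  ((finite_support_inter_fst hn w).preimage fun _ _ _ _ h => congrArg (·.2.1) h).subset
    fun _ hk => ⟨hk, rfl⟩

theorem support_subset_range_unit {d : GTrip G → R} (hd : d ∈ Diag R G) :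
    support d ⊆ Set.range unit :=
  support_subset_of_mem_span hd fun _ ⟨_, h⟩ =>
    h ▸ Set.support_indicator_subset.trans (unitSet_subset_range_unit _)

theorem starf_starf [StarRing R] (f : GTrip G → R) : starf (starf f) = f := by
  ext g
  simp [starf, ginv_ginv]

theorem starf_mem_steinberg [StarRing R] {n : GTrip G → R} (hn : n ∈ Steinberg R G) :
    starf n ∈ Steinberg R G := by
  induction hn using Submodule.span_induction with
  | mem f hf =>
    obtain ⟨μ, ν, hμν, rfl⟩ := hf
    refine Submodule.subset_span ⟨ν, μ, hμν.symm, funext fun g => ?_⟩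
    by_cases hg : g ∈ ZZ ν μ
    · simp [starf, Set.indicator_of_mem hg, Set.indicator_of_mem (ginv_mem_ZZ.mpr hg)]
    · simp [starf, Set.indicator_of_notMem hg, Set.indicator_of_notMem (mt ginv_mem_ZZ.mp hg)]
  | zero => convert (Steinberg R G).zero_mem using 1; ext; simp [starf]
  | add f f' _ _ hf hf' => convert add_mem hf hf' using 1; ext; simp [starf]
  | smul r f _ hf =>
    convert (Steinberg R G).smul_mem (star r) hf using 1; ext; simp [starf]

end steinberg

section convolution

theorem conv_of_support_subset_range_unit (f d : GTrip G → R) (hd : support d ⊆ Set.range unit)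
    (ξ : GTrip G) : conv f d ξ = f ξ * d (unit ξ.2.2) := by
  show ∑ᶠ η ∈ {η : GTrip G | η.1 = ξ.1}, f η * d (gmul (ginv η) ξ) = _
  refine (finsum_mem_eq_single (show ξ ∈ {η : GTrip G | η.1 = ξ.1} from rfl) ?_).trans ?_
  · intro η (hη : η.1 = ξ.1) hne
    suffices d (gmul (ginv η) ξ) = 0 by rw [this, mul_zero]
    refine notMem_support.mp fun h => hne ?_
    obtain ⟨y, hy⟩ := hd h
    simp only [unit, gmul, ginv, Prod.ext_iff] at hy
    exact Prod.ext hη (Prod.ext (by omega) (hy.1.symm.trans hy.2.2))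
  · simp [gmul, ginv, unit]

theorem conv_conv_indicator_starf_eq_single [StarRing R] {n : GTrip G → R}
    {U : Set (InfPath G)} {w w' x : InfPath G} {k₀ t : ℤ} (hx : x ∈ U)
    (hU : ∀ ξ : GTrip G, n ξ ≠ 0 → ξ.1 = w → ξ.2.2 ∈ U → ξ.2.2 = x)
    (hiso : ∀ k, n (w, k, x) ≠ 0 → n (w', k - t, x) ≠ 0 → k = k₀) :
    conv (conv n ((unitSet U).indicator 1)) (starf n) (w, t, w') =
      n (w, k₀, x) * star (n (w', k₀ - t, x)) := by
  have hconv := conv_of_support_subset_range_unit n ((unitSet U).indicator 1)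
    (Set.support_indicator_subset.trans (unitSet_subset_range_unit U))
  show ∑ᶠ ξ ∈ {ξ : GTrip G | ξ.1 = w}, _ = _
  refine (finsum_mem_eq_single (show (w, k₀, x) ∈ {ξ : GTrip G | ξ.1 = w} from rfl) ?_).trans ?_
  · intro ξ (hξ : ξ.1 = w) hne
    rw [hconv]
    by_contra hnz
    have hnξ : n ξ ≠ 0 := left_ne_zero_of_mul (left_ne_zero_of_mul hnz)
    have hξU : ξ.2.2 ∈ U := by
      by_contra h
      exact left_ne_zero_of_mul hnz (by simp [Set.indicator_of_notMem (mt unit_mem_unitSet.mp h)])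
    have hsrc := hU ξ hnξ hξ hξU
    obtain ⟨w₁, k, y⟩ := ξ
    subst hξ hsrc
    have hb : n (w', k - t, y) ≠ 0 := by
      have := star_ne_zero.mp (right_ne_zero_of_mul hnz)
      rwa [ginv, gmul, ginv, neg_add, neg_neg, ← sub_eq_add_neg] at this
    exact hne (by rw [hiso k hnξ hb])
  · rw [hconv, Set.indicator_of_mem (unit_mem_unitSet.mpr hx), Pi.one_apply, mul_one]
    rw [starf, gmul, ginv, ginv, neg_add, neg_neg, ← sub_eq_add_neg]

end convolution

section normalizer

variable [StarRing R]

theorem isNormalizer_starf {n : GTrip G → R} (hn : IsNormalizer n) : IsNormalizer (starf n) :=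
  ⟨starf_mem_steinberg hn.1, fun d hd => by simpa only [starf_starf] using (hn.2 d hd).symm⟩

theorem IsNormalizer.fst_eq_of_snd_eq [IsDomain R] {n : GTrip G → R} (hn : IsNormalizer n)
    {γ η : GTrip G} (hγ : n γ ≠ 0) (hη : n η ≠ 0) (hγη : γ.2.2 = η.2.2) : γ.1 = η.1 := by
  set x := γ.2.2
  obtain ⟨k₀, t, hk₀, ht, hiso⟩ := Int.exists_isolated_sub_mem
    (finite_setOf_apply_ne_zero hn.1 γ.1 x) (finite_setOf_apply_ne_zero hn.1 η.1 x)
    ⟨γ.2.1, hγ⟩ ⟨η.2.1, hγη ▸ hη⟩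
  obtain ⟨L, hL⟩ :=
    ((finite_support_inter_fst hn.1 γ.1).image (·.2.2.edges)).exists_eq_of_forall_lt_eq x.edges
  set d : GTrip G → R := (unitSet (Zset (x.prefix L))).indicator 1
  have hd : d ∈ Diag R G := Submodule.subset_span ⟨x.prefix L, rfl⟩
  have hval := conv_conv_indicator_starf_eq_single (n := n) (w' := η.1) (x.mem_Zset_prefix L)
    (fun ξ hξ hξw hξU => InfPath.edges_injective (hL _ ⟨ξ, ⟨hξ, hξw⟩, rfl⟩ hξU.1)) hiso
  have hne : conv (conv n d) (starf n) (γ.1, t, η.1) ≠ 0 :=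
    hval ▸ mul_ne_zero hk₀ (star_ne_zero.mpr ht)
  obtain ⟨y, hy⟩ := support_subset_range_unit (hn.2 d hd).1 hne
  simp only [unit, Prod.ext_iff] at hy
  exact hy.1.symm.trans hy.2.2

theorem IsNormalizer.snd_eq_of_fst_eq [IsDomain R] {n : GTrip G → R} (hn : IsNormalizer n)
    {γ η : GTrip G} (hγ : n γ ≠ 0) (hη : n η ≠ 0) (hγη : γ.1 = η.1) : γ.2.2 = η.2.2 :=
  (isNormalizer_starf hn).fst_eq_of_snd_eq (γ := ginv γ) (η := ginv η)
    (by simpa [LPA.starf, ginv_ginv] using hγ) (by simpa [LPA.starf, ginv_ginv] using hη) hγη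

end normalizer

end LPA

open LPA in
theorem supp_normalizer_iso_general {G : DirGraph}
    {R : Type} [CommRing R] [IsDomain R] [StarRing R]
    (n : GTrip G → R) (hn : IsNormalizer n) :
    setMul (Function.support n) (setInv (Function.support n)) ∪
      setMul (setInv (Function.support n)) (Function.support n) ⊆
      {g : GTrip G | g ∈ GraphGroupoid G ∧ g.1 = g.2.2} := by
  have hsupp := support_subset_graphGroupoid hn.1
  have hinv := setInv_subset_graphGroupoid hsupp
  rintro g (hg | hg)
  · refine ⟨setMul_subset_graphGroupoid hsupp hinv hg, ?_⟩
    obtain ⟨γ, hγ, _, ⟨η, hη, rfl⟩, hγη, rfl⟩ := hg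
    exact hn.fst_eq_of_snd_eq (γ := γ) (η := η) hγ hη hγη
  · refine ⟨setMul_subset_graphGroupoid hinv hsupp hg, ?_⟩
    obtain ⟨_, ⟨γ, hγ, rfl⟩, η, hη, hγη, rfl⟩ := hg
    exact hn.snd_eq_of_fst_eq (γ := γ) (η := η) hγ hη hγη

open LPA in
/-- For a normalizer `n` of the diagonal,
`supp(n) supp(n)⁻¹ ∪ supp(n)⁻¹ supp(n) ⊆ Iso(G_E)`. -/
theorem supp_normalizer_iso {G : DirGraph} (hrf : RowFinite G) (hns : NoSources G)
    {R : Type} [CommRing R] [IsDomain R] [StarRing R]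
    (n : GTrip G → R) (hn : IsNormalizer n) :
    setMul (Function.support n) (setInv (Function.support n)) ∪
      setMul (setInv (Function.support n)) (Function.support n) ⊆
      {g : GTrip G | g ∈ GraphGroupoid G ∧ g.1 = g.2.2} :=
  supp_normalizer_iso_general n hn
end

section
/- Let $n$ be a normalizer of $D(E)$ in $A_R(G_E)$ over an integral domain $R$ and let $x \in \operatorname{dom}(n)$ be an isolated infinite path. Then $n p_x n^* = n n^* p_{\alpha_n(x)}$ and $n p_x = p_{\alpha_n(x)} n$. -/
open scoped Classical BigOperators

namespace LPA

variable {G : DirGraph}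

variable (R : Type) [CommRing R]

variable {R}

/-!
The isolated point `x` is a cylinder `Z(μ)`, so `p_x ∈ D(E)`, and the normalizer property puts
`n p_x n^*` and `n^* d n` in the diagonal for every `d ∈ D(E)`. An element of `A_R(G_E)` has only
finitely many lags between two given paths; if every arrow of `f` into `y` comes from `z`, the
coefficient of `f * h` at the sum of the maximal lags of `f` and of `h` is a single product of
nonzero elements of the domain `R`. For `n p_x n^*` this shows that all arrows of `supp n` out of
`x` end at one path, necessarily `α_n(x)`; for `n^* d n` with `d(α_n(x)) = 1`, that every arrow of
`supp n` into `α_n(x)` starts at `x`. So on `supp n`, having source `x` is equivalent to having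
range `α_n(x)`, and both identities follow by comparing supports.
-/

theorem finsum_mem_eq_single {α M : Type*} [AddCommMonoid M] {s : Set α} {f : α → M} {a : α}
    (ha : a ∈ s) (h : ∀ b ∈ s, b ≠ a → f b = 0) : ∑ᶠ b ∈ s, f b = f a := by
  rw [finsum_mem_def, finsum_eq_single _ a fun b hb => ?_, Set.indicator_of_mem ha]
  by_cases hbs : b ∈ s
  · rw [Set.indicator_of_mem hbs, h b hbs hb]
  · exact Set.indicator_of_notMem hbs f

def InfPath.take (x : InfPath G) (N : ℕ) : FinPath G :=
  ⟨N, x.rng, x.edges, fun i _ => x.compat i, fun _ => rfl⟩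

theorem InfPath.mem_Zset_take (x : InfPath G) (N : ℕ) : x ∈ Zset (x.take N) :=
  ⟨fun _ _ => rfl, rfl⟩

theorem InfPath.antitone_Zset_take (x : InfPath G) : Antitone fun N => Zset (x.take N) :=
  fun _ _ hNM _ hw => ⟨fun i hi => hw.1 i (hi.trans_le hNM), hw.2⟩

theorem Zset_take_subset_of_mem {μ : FinPath G} {x : InfPath G} (hx : x ∈ Zset μ) :
    Zset (x.take μ.len) ⊆ Zset μ :=
  fun _ hw => ⟨fun i hi => (hw.1 i hi).trans (hx.1 i hi), hw.2.trans hx.2⟩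

theorem exists_Zset_take_subset_of_isOpen {U : Set (InfPath G)} (hU : IsOpen U) {x : InfPath G}
    (hx : x ∈ U) : ∃ N, Zset (x.take N) ⊆ U := by
  induction hU with
  | basic S hS =>
    obtain ⟨μ, rfl⟩ := hS
    exact ⟨μ.len, Zset_take_subset_of_mem hx⟩
  | univ => exact ⟨0, Set.subset_univ _⟩
  | inter U V _ _ ihU ihV =>
    obtain ⟨N, hN⟩ := ihU hx.1
    obtain ⟨M, hM⟩ := ihV hx.2
    exact ⟨max N M, Set.subset_inter ((x.antitone_Zset_take (le_max_left N M)).trans hN)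
      ((x.antitone_Zset_take (le_max_right N M)).trans hM)⟩
  | sUnion S _ ih =>
    obtain ⟨U, hUS, hxU⟩ := hx
    obtain ⟨N, hN⟩ := ih U hUS hxU
    exact ⟨N, hN.trans (Set.subset_sUnion_of_mem hUS)⟩

theorem ppt_mem_diag_of_isOpen {x : InfPath G} (hx : IsOpen ({x} : Set (InfPath G))) :
    ppt R x ∈ Diag R G := by
  obtain ⟨N, hN⟩ := exists_Zset_take_subset_of_isOpen hx rfl
  have hZ : Zset (x.take N) = {x} :=
    hN.antisymm (Set.singleton_subset_iff.mpr (x.mem_Zset_take N))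
  refine Submodule.subset_span ⟨x.take N, ?_⟩
  rw [hZ, ppt]
  congr 1
  ext g
  simp [unitSet]

theorem support_subset_range_unit_of_mem_diag {d : GTrip G → R} (hd : d ∈ Diag R G) :
    Function.support d ⊆ Set.range unit := by
  induction hd using Submodule.span_induction with
  | mem d hd =>
    obtain ⟨μ, rfl⟩ := hd
    rintro g hg
    obtain ⟨x, -, rfl⟩ := Set.mem_of_indicator_ne_zero hg
    exact ⟨x, rfl⟩
  | zero => simp
  | add d e _ _ hd he => exact (Function.support_add d e).trans (Set.union_subset hd he)
  | smul r d _ hd => exact (Function.support_const_smul_subset r d).trans hd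

theorem eq_of_mem_diag_of_ne_zero {d : GTrip G → R} (hd : d ∈ Diag R G) {y w : InfPath G}
    {k : ℤ} (h : d (y, k, w) ≠ 0) : y = w := by
  obtain ⟨v, hv⟩ := support_subset_range_unit_of_mem_diag hd h
  simp only [unit, Prod.ext_iff] at hv
  exact hv.1.symm.trans hv.2.2

theorem support_ppt_subset_range_unit (x : InfPath G) :
    Function.support (ppt R x) ⊆ Set.range unit :=
  Set.support_indicator_subset.trans (Set.singleton_subset_iff.mpr ⟨x, rfl⟩)

theorem ppt_apply_unit (x w : InfPath G) : ppt R x (unit w) = if w = x then 1 else 0 := by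
  by_cases h : w = x
  · simp [ppt, h]
  · simp [ppt, h, unit]

theorem conv_apply_of_support_units_right {f d : GTrip G → R}
    (hd : Function.support d ⊆ Set.range unit) (g : GTrip G) :
    conv f d g = f g * d (unit g.2.2) := by
  rw [conv, finsum_mem_eq_single (a := g) (by rfl)]
  · simp [gmul, ginv, unit]
  · intro η hη hne
    by_contra h
    obtain ⟨v, hv⟩ := hd (right_ne_zero_of_mul h)
    simp only [unit, gmul, ginv, Prod.ext_iff] at hv
    exact hne (Prod.ext hη (Prod.ext (by omega) (hv.1.symm.trans hv.2.2)))

theorem conv_apply_of_support_units_left {f d : GTrip G → R}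
    (hd : Function.support d ⊆ Set.range unit) (g : GTrip G) :
    conv d f g = d (unit g.1) * f g := by
  rw [conv, finsum_mem_eq_single (a := unit g.1) (by rfl)]
  · simp [gmul, ginv, unit]
  · intro η hη hne
    by_contra h
    obtain ⟨v, rfl⟩ := hd (left_ne_zero_of_mul h)
    exact hne (congrArg unit hη)

theorem conv_ppt_right_apply (f : GTrip G → R) (x : InfPath G) (g : GTrip G) :
    conv f (ppt R x) g = if g.2.2 = x then f g else 0 := by
  rw [conv_apply_of_support_units_right (support_ppt_subset_range_unit x), ppt_apply_unit]
  split_ifs <;> simp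

theorem conv_ppt_left_apply (f : GTrip G → R) (y : InfPath G) (g : GTrip G) :
    conv (ppt R y) f g = if g.1 = y then f g else 0 := by
  rw [conv_apply_of_support_units_left (support_ppt_subset_range_unit y), ppt_apply_unit]
  split_ifs <;> simp

def lagSupport (f : GTrip G → R) (y w : InfPath G) : Set ℤ :=
  Function.support fun k => f (y, k, w)

theorem lagSupport_finite_of_mem_steinberg {f : GTrip G → R} (hf : f ∈ Steinberg R G)
    (y w : InfPath G) : (lagSupport f y w).Finite := by
  induction hf using Submodule.span_induction with
  | mem f hf =>
    obtain ⟨μ, ν, -, rfl⟩ := hf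
    refine (Set.finite_singleton ((μ.len : ℤ) - ν.len)).subset fun k hk => ?_
    obtain ⟨z, -, -, hk⟩ := Set.mem_of_indicator_ne_zero hk
    exact hk
  | zero => simp [lagSupport]
  | add f g _ _ hf hg => exact (hf.union hg).subset (Function.support_add _ _)
  | smul r f _ hf => exact hf.subset (Function.support_const_smul_subset r _)

theorem lagSupport_starf [StarRing R] (f : GTrip G → R) (y w : InfPath G) :
    lagSupport (starf f) y w = -lagSupport f w y := by
  ext k
  simp [lagSupport, starf, ginv]

theorem lagSupport_conv_of_support_units_right {f d : GTrip G → R}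
    (hd : Function.support d ⊆ Set.range unit) {z : InfPath G} (hdz : d (unit z) = 1)
    (y : InfPath G) : lagSupport (conv f d) y z = lagSupport f y z := by
  ext k
  simp [lagSupport, conv_apply_of_support_units_right hd, hdz]

theorem exists_conv_ne_zero_of_forall_source_eq [IsDomain R] {f h : GTrip G → R}
    {y z w : InfPath G} (hsrc : ∀ η : GTrip G, η.1 = y → f η ≠ 0 → η.2.2 = z)
    (hf : (lagSupport f y z).Finite) (hf₀ : (lagSupport f y z).Nonempty)
    (hh : (lagSupport h z w).Finite) (hh₀ : (lagSupport h z w).Nonempty) :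
    ∃ k, conv f h (y, k, w) ≠ 0 := by
  obtain ⟨a, ha, hamax⟩ := Set.exists_max_image _ id hf hf₀
  obtain ⟨b, hb, hbmax⟩ := Set.exists_max_image _ id hh hh₀
  have hsingle : conv f h (y, a + b, w) = f (y, a, z) * h (z, b, w) := by
    rw [conv, finsum_mem_eq_single (a := (y, a, z)) (by rfl)]
    · simp [gmul, ginv]
    · rintro ⟨_, j, v⟩ rfl hne
      by_contra hη
      obtain ⟨hfη, hhη⟩ := mul_ne_zero_iff.mp hη
      obtain rfl : v = z := hsrc _ rfl hfη
      have hja : j ≤ a := hamax j hfη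
      have hbj : -j + (a + b) ≤ b := hbmax _ hhη
      exact hne (Prod.ext rfl (Prod.ext (show j = a by omega) rfl))
  exact ⟨a + b, hsingle ▸ mul_ne_zero ha hb⟩

section Normalizer

variable [StarRing R] {n : GTrip G → R}

theorem exists_apply_alphaFun_ne_zero {x : InfPath G} (hxd : x ∈ domSet n) :
    ∃ k, n (alphaFun n x, k, x) ≠ 0 := by
  have hsrc : ∃ g : GTrip G, n g ≠ 0 ∧ g.2.2 = x := by
    obtain ⟨η, -, hη⟩ := exists_ne_zero_of_finsum_mem_ne_zero hxd
    exact ⟨_, right_ne_zero_of_mul hη, rfl⟩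
  rw [alphaFun, dif_pos hsrc]
  obtain ⟨hg, hgx⟩ := hsrc.choose_spec
  generalize hsrc.choose = g at hg hgx ⊢
  subst hgx
  exact ⟨g.2.1, hg⟩

variable [IsDomain R] (hn : IsNormalizer n) {x : InfPath G} (hx : ppt R x ∈ Diag R G)
include hn hx

theorem IsNormalizer.range_eq_of_ne_zero {y y' : InfPath G} {k k' : ℤ} (h : n (y, k, x) ≠ 0)
    (h' : n (y', k', x) ≠ 0) : y = y' := by
  obtain ⟨j, hj⟩ : ∃ j, conv (conv n (ppt R x)) (starf n) (y, j, y') ≠ 0 := by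
    have hlag := lagSupport_conv_of_support_units_right (f := n) (z := x)
      (support_ppt_subset_range_unit x) (by simp [ppt_apply_unit]) y
    apply exists_conv_ne_zero_of_forall_source_eq (z := x)
    · intro η _ hη
      rw [conv_ppt_right_apply] at hη
      by_contra hηx
      exact hη (if_neg hηx)
    · exact hlag ▸ lagSupport_finite_of_mem_steinberg hn.1 y x
    · exact hlag ▸ ⟨k, h⟩
    · exact lagSupport_starf n x y' ▸ (lagSupport_finite_of_mem_steinberg hn.1 y' x).neg
    · exact lagSupport_starf n x y' ▸ ⟨-k', Set.neg_mem_neg.mpr h'⟩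
  exact eq_of_mem_diag_of_ne_zero (hn.2 _ hx).1 hj

theorem IsNormalizer.source_eq_of_ne_zero {y w : InfPath G} {k k' : ℤ} (h₀ : n (y, k, x) ≠ 0)
    (h : n (y, k', w) ≠ 0) : w = x := by
  -- any element of the diagonal that is `1` at `y` would do
  set d : GTrip G → R := Set.indicator (unitSet (Zset (y.take 0))) 1
  have hd : d ∈ Diag R G := Submodule.subset_span ⟨_, rfl⟩
  have hdsupp := support_subset_range_unit_of_mem_diag hd
  obtain ⟨j, hj⟩ : ∃ j, conv (conv (starf n) d) n (x, j, w) ≠ 0 := by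
    have hlag := lagSupport_conv_of_support_units_right (f := starf n) hdsupp
      (Set.indicator_of_mem (show unit y ∈ unitSet (Zset (y.take 0)) from
        ⟨y, y.mem_Zset_take 0, rfl⟩) 1) x
    apply exists_conv_ne_zero_of_forall_source_eq (z := y)
    · rintro ⟨_, i, v⟩ rfl hη
      rw [conv_apply_of_support_units_right hdsupp] at hη
      exact hn.range_eq_of_ne_zero hx (star_ne_zero.mp (left_ne_zero_of_mul hη)) h₀
    · rw [hlag, lagSupport_starf]
      exact (lagSupport_finite_of_mem_steinberg hn.1 y x).neg
    · rw [hlag, lagSupport_starf]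
      exact ⟨-k, Set.neg_mem_neg.mpr h₀⟩
    · exact lagSupport_finite_of_mem_steinberg hn.1 y w
    · exact ⟨k', h⟩
  exact (eq_of_mem_diag_of_ne_zero (hn.2 d hd).2 hj).symm

theorem IsNormalizer.source_eq_iff_range_eq (hxd : x ∈ domSet n) {g : GTrip G} (hg : n g ≠ 0) :
    g.2.2 = x ↔ g.1 = alphaFun n x := by
  obtain ⟨k, hk⟩ := exists_apply_alphaFun_ne_zero hxd
  obtain ⟨y, j, w⟩ := g
  constructor
  · rintro rfl
    exact hn.range_eq_of_ne_zero hx hg hk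
  · rintro rfl
    exact hn.source_eq_of_ne_zero hx hk hg

end Normalizer

theorem conv_ppt_right_eq_conv_ppt_left {f : GTrip G → R} {x y : InfPath G}
    (h : ∀ g, f g ≠ 0 → (g.2.2 = x ↔ g.1 = y)) : conv f (ppt R x) = conv (ppt R y) f := by
  funext g
  rw [conv_ppt_right_apply, conv_ppt_left_apply]
  by_cases hg : f g = 0
  · simp [hg]
  · simp only [h g hg]

theorem conv_conv_ppt_starf_eq [StarRing R] {n : GTrip G → R} {x y : InfPath G}
    (h : ∀ g, n g ≠ 0 → (g.2.2 = x ↔ g.1 = y)) :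
    conv (conv n (ppt R x)) (starf n) = conv (conv n (starf n)) (ppt R y) := by
  funext γ
  rw [conv_ppt_right_apply, conv, conv]
  have hterm : ∀ η : GTrip G, conv n (ppt R x) η * starf n (gmul (ginv η) γ) =
      if γ.2.2 = y then n η * starf n (gmul (ginv η) γ) else 0 := by
    intro η
    rw [conv_ppt_right_apply]
    by_cases h0 : starf n (gmul (ginv η) γ) = 0
    · simp [h0]
    · have hiff : η.2.2 = x ↔ γ.2.2 = y :=
        h (ginv (gmul (ginv η) γ)) fun h' => h0 (by simp only [starf, h', star_zero])
      simp only [hiff]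
      split_ifs <;> simp
  rw [finsum_mem_congr rfl fun η _ => hterm η]
  split_ifs <;> simp

end LPA

open LPA in
theorem np_isolated_general {G : DirGraph}
    {R : Type} [CommRing R] [IsDomain R] [StarRing R]
    (n : GTrip G → R) (hn : IsNormalizer n) (x : InfPath G)
    (hx : IsOpen ({x} : Set (InfPath G))) (hxd : x ∈ domSet n) :
    conv (conv n (ppt R x)) (starf n) =
        conv (conv n (starf n)) (ppt R (alphaFun n x)) ∧
      conv n (ppt R x) = conv (ppt R (alphaFun n x)) n := by
  have hkey := fun g => hn.source_eq_iff_range_eq (ppt_mem_diag_of_isOpen hx) hxd (g := g)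
  exact ⟨conv_conv_ppt_starf_eq hkey, conv_ppt_right_eq_conv_ppt_left hkey⟩

open LPA in
/-- For an isolated `x ∈ dom(n)`: `n p_x n^* = n n^* p_{α_n(x)}` and
`n p_x = p_{α_n(x)} n`. -/
theorem np_isolated {G : DirGraph} (hrf : RowFinite G) (hns : NoSources G)
    {R : Type} [CommRing R] [IsDomain R] [StarRing R]
    (n : GTrip G → R) (hn : IsNormalizer n) (x : InfPath G)
    (hx : IsOpen ({x} : Set (InfPath G))) (hxd : x ∈ domSet n) :
    conv (conv n (ppt R x)) (starf n) =
        conv (conv n (starf n)) (ppt R (alphaFun n x)) ∧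
      conv n (ppt R x) = conv (ppt R (alphaFun n x)) n :=
  np_isolated_general n hn x hx hxd
end
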